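/- (LCD failure mode under selection bias: reversed causal direction.) Let G be the directed mixed graph on node set {C, X, Y, S} whose edges are exactly the directed edges C → S, X → S, and Y → X. Then: no node other than C is an ancestor of C; C ⊥ Y | {X, S}; C ⊥̸ Y | {S}; and C ⊥̸ X | {S}; yet Y ∈ an(X) and X ∉ an(Y). Hence the LCD independence pattern conditioned on the selection node S holds while the causal (ancestral) relation is the reverse of the one LCD would infer. -/
import Mathlib


/-- The three ways an edge of a directed mixed graph can occur on a walk,
when traversed from left to right: `fwd` is a directed edge pointing to the
right node, `bwd` is a directed edge pointing to the left node, and `bi` is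
a bidirected edge. -/
inductive EdgeDir : Type
  | fwd
  | bwd
  | bi
  deriving DecidableEq

/-- The edge has an arrowhead at its right endpoint. -/
def EdgeDir.headAtRight (e : EdgeDir) : Prop := e = .fwd ∨ e = .bi

/-- The edge has an arrowhead at its left endpoint. -/
def EdgeDir.headAtLeft (e : EdgeDir) : Prop := e = .bwd ∨ e = .bi

/-- A directed mixed graph (DMG) on node type `α`: an irreflexive relation of
directed edges and an irreflexive symmetric relation of bidirected edges. -/
structure DMG (α : Type*) where
  dir : α → α → Prop
  bidir : α → α → Prop
  dir_irrefl : ∀ x, ¬ dir x x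
  bidir_irrefl : ∀ x, ¬ bidir x x
  bidir_symm : ∀ x y, bidir x y → bidir y x

namespace DMG

variable {α : Type*}

/-- `G.Anc x y`: there is a directed path (possibly of length zero) from `x` to `y`,
i.e. `x` is an ancestor of `y` (equivalently, `y` is a descendant of `x`). -/
def Anc (G : DMG α) (x y : α) : Prop := Relation.ReflTransGen G.dir x y

/-- Ancestors of a set of nodes. -/
def ancSet (G : DMG α) (S : Set α) : Set α := {x | ∃ y ∈ S, G.Anc x y}

/-- The strongly connected component of `x`: all nodes that are both ancestors
and descendants of `x`. -/
def scc (G : DMG α) (x : α) : Set α := {y | G.Anc y x ∧ G.Anc x y}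

/-- Validity of one step of a walk, from `a` to `b`, traversed as `e`. -/
def StepValid (G : DMG α) (a : α) (e : EdgeDir) (b : α) : Prop :=
  match e with
  | .fwd => G.dir a b
  | .bwd => G.dir b a
  | .bi => G.bidir a b

/-- A walk from `x` to `y` in a DMG `G`: an alternating sequence of `n + 1` nodes
and `n` edges of `G`. -/
structure Walk (G : DMG α) (x y : α) where
  n : ℕ
  node : Fin (n + 1) → α
  edge : Fin n → EdgeDir
  first_eq : node 0 = x
  last_eq : node (Fin.last n) = y
  valid : ∀ i : Fin n, G.StepValid (node i.castSucc) (edge i) (node i.succ)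

namespace Walk

variable {G : DMG α} {x y : α}

/-- A path is a walk all of whose nodes are distinct. -/
def IsPath (w : Walk G x y) : Prop := Function.Injective w.node

/-- The interior node at position `i + 1` of the walk is a collider: both
adjacent edges have an arrowhead at it. -/
def IsColliderAt (w : Walk G x y) (i : ℕ) (h : i + 1 < w.n) : Prop :=
  (w.edge ⟨i, by omega⟩).headAtRight ∧ (w.edge ⟨i + 1, h⟩).headAtLeft

/-- The walk is σ-blocked by the conditioning set `C`. -/
def Blocked (w : Walk G x y) (C : Set α) : Prop :=
  x ∈ C ∨ y ∈ C ∨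
  (∃ (i : ℕ) (h : i + 1 < w.n), w.IsColliderAt i h ∧
    w.node ⟨i + 1, by omega⟩ ∉ G.ancSet C) ∨
  (∃ (i : ℕ) (h : i + 1 < w.n), ¬ w.IsColliderAt i h ∧
    w.node ⟨i + 1, by omega⟩ ∈ C ∧
    ((w.edge ⟨i, by omega⟩ = .bwd ∧
        w.node ⟨i, by omega⟩ ∉ G.scc (w.node ⟨i + 1, by omega⟩)) ∨
     (w.edge ⟨i + 1, h⟩ = .fwd ∧
        w.node ⟨i + 2, by omega⟩ ∉ G.scc (w.node ⟨i + 1, by omega⟩))))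

end Walk

/-- σ-separation: every path between `x` and `y` is σ-blocked by `C`. -/
def sigmaSep (G : DMG α) (x y : α) (C : Set α) : Prop :=
  ∀ w : Walk G x y, w.IsPath → w.Blocked C

/-- A confounding path between `x` and `y`: a path of nonzero length whose first
edge has an arrowhead at `x`, whose last edge has an arrowhead at `y`, and all of
whose non-endpoint nodes are non-colliders. -/
def IsConfoundingPath {G : DMG α} {x y : α} (w : Walk G x y) : Prop :=
  w.IsPath ∧ ∃ h : 0 < w.n,
    (w.edge ⟨0, h⟩).headAtLeft ∧ (w.edge ⟨w.n - 1, by omega⟩).headAtRight ∧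
    ∀ (i : ℕ) (hi : i + 1 < w.n), ¬ w.IsColliderAt i hi

/-- `x` and `y` are confounded in `G` if some confounding path connects them. -/
def Confounded (G : DMG α) (x y : α) : Prop := ∃ w : Walk G x y, IsConfoundingPath w

/-- A directed path from `x` to `y` (of length at least one) all of whose
intermediate nodes avoid `M`. -/
def DirPathAvoiding (G : DMG α) (M : Set α) (x y : α) : Prop :=
  ∃ l : List α, List.Chain G.dir x (l ++ [y]) ∧ ∀ v ∈ l, v ∉ M

/-- A path between `x` and `y` with an arrowhead at `x` and an arrowhead at `y`,
all of whose intermediate nodes lie outside `M` and are non-colliders. -/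
def BidirPathAvoiding (G : DMG α) (M : Set α) (x y : α) : Prop :=
  ∃ w : Walk G x y, w.IsPath ∧ (∃ h : 0 < w.n,
    (w.edge ⟨0, h⟩).headAtLeft ∧ (w.edge ⟨w.n - 1, by omega⟩).headAtRight) ∧
    ∀ (i : ℕ) (hi : i + 1 < w.n),
      w.node ⟨i + 1, by omega⟩ ∉ M ∧ ¬ w.IsColliderAt i hi

/-- The latent projection of `G` onto the node set `M`. -/
def latentProj (G : DMG α) (M : Set α) : DMG M where
  dir a b := a.1 ≠ b.1 ∧ DirPathAvoiding G M a.1 b.1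
  bidir a b := a.1 ≠ b.1 ∧
    (BidirPathAvoiding G M a.1 b.1 ∨ BidirPathAvoiding G M b.1 a.1)
  dir_irrefl := fun _a h => h.1 rfl
  bidir_irrefl := fun _a h => h.1 rfl
  bidir_symm := fun _a _b h => ⟨Ne.symm h.1, Or.symm h.2⟩

end DMG

/-- The node set `{C, X, Y, S}`. -/
inductive N4 : Type
  | C | X | Y | S
  deriving DecidableEq

open N4 in
/-- The DMG with exactly the directed edges `C → S`, `X → S`, `Y → X`. -/
def Grev : DMG N4 where
  dir a b := (a = C ∧ b = S) ∨ (a = X ∧ b = S) ∨ (a = Y ∧ b = X)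
  bidir _ _ := False
  dir_irrefl := by rintro a (⟨rfl, h⟩ | ⟨rfl, h⟩ | ⟨rfl, h⟩) <;> simp at h
  bidir_irrefl := fun _ h => h
  bidir_symm := fun _ _ h => h.elim


open N4

instance : Fintype N4 :=
  ⟨⟨{N4.C, N4.X, N4.Y, N4.S}, by decide⟩, by intro a; cases a <;> decide⟩

lemma grev_S_no_out {b : N4} (h : Grev.dir S b) : False := by
  simp [Grev] at h

lemma anc_S_eq {v : N4} (h : Grev.Anc S v) : v = S := by
  induction h with
  | refl => rfl
  | tail _ hd ih => subst ih; exact absurd hd grev_S_no_out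

lemma anc_to_C {v : N4} (h : Grev.Anc v C) : v = C := by
  rcases Relation.ReflTransGen.cases_tail h with rfl | ⟨b, _, hd⟩
  · rfl
  · simp [Grev] at hd

lemma not_anc_S_X : ¬ Grev.Anc S X := fun h => N4.noConfusion (anc_S_eq h)

lemma not_anc_X_Y : ¬ Grev.Anc X Y := by
  intro h
  rcases Relation.ReflTransGen.cases_head h with h | ⟨b, hd, ht⟩
  · exact N4.noConfusion h
  · rcases hd with ⟨hx, rfl⟩ | ⟨hx, rfl⟩ | ⟨hx, hb⟩
    · exact N4.noConfusion (anc_S_eq ht)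
    · exact N4.noConfusion (anc_S_eq ht)
    · exact N4.noConfusion hx

lemma step_from_C {e : EdgeDir} {b : N4} (h : Grev.StepValid C e b) :
    b = S ∧ e = .fwd := by
  cases e <;> simp [DMG.StepValid, Grev] at h <;> simp_all

lemma step_to_Y {e : EdgeDir} {a : N4} (h : Grev.StepValid a e Y) :
    a = X ∧ e = .bwd := by
  cases e <;> simp [DMG.StepValid, Grev] at h <;> simp_all

lemma step_S_X {e : EdgeDir} (h : Grev.StepValid S e X) : e = .bwd := by
  cases e
  · simp [DMG.StepValid, Grev] at h
  · rfl
  · simp [DMG.StepValid, Grev] at h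

lemma S_not_scc_X : S ∉ Grev.scc X := fun h => not_anc_S_X h.1

/-- The canonical path C → S ← X viewed C-to-X. -/
def wCX : DMG.Walk Grev C X where
  n := 2
  node := ![C, S, X]
  edge := ![.fwd, .bwd]
  first_eq := rfl
  last_eq := rfl
  valid := by
    intro i
    fin_cases i
    · exact Or.inl ⟨rfl, rfl⟩
    · exact Or.inr (Or.inl ⟨rfl, rfl⟩)

/-- The canonical path C → S ← X ← Y viewed C-to-Y. -/
def wCY : DMG.Walk Grev C Y where
  n := 3
  node := ![C, S, X, Y]
  edge := ![.fwd, .bwd, .bwd]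
  first_eq := rfl
  last_eq := rfl
  valid := by
    intro i
    fin_cases i
    · exact Or.inl ⟨rfl, rfl⟩
    · exact Or.inr (Or.inl ⟨rfl, rfl⟩)
    · exact Or.inr (Or.inr ⟨rfl, rfl⟩)

lemma S_mem_ancSet_S : S ∈ Grev.ancSet {S} := ⟨S, rfl, Relation.ReflTransGen.refl⟩

open N4 in
/-- LCD failure mode under selection bias (reversed causal
direction): the LCD pattern conditional on `S` holds while the ancestral
relation is reversed. -/
theorem lcd_failure_reversed_direction :
    (∀ v : N4, Grev.Anc v C → v = C) ∧
    Grev.sigmaSep C Y {X, S} ∧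
    ¬ Grev.sigmaSep C Y {S} ∧
    ¬ Grev.sigmaSep C X {S} ∧
    Grev.Anc Y X ∧ ¬ Grev.Anc X Y := by
  refine ⟨fun v h => anc_to_C h, ?_, ?_, ?_,
    Relation.ReflTransGen.single (Or.inr (Or.inr ⟨rfl, rfl⟩)), not_anc_X_Y⟩
  · -- sigmaSep C Y {X, S}
    intro w hp
    obtain ⟨n, node, edge, h0, hl, hv⟩ := w
    have hp' : Function.Injective node := hp
    have hn4 : n + 1 ≤ 4 := by
      have h1 := Fintype.card_le_of_injective node hp'
      have h2 : Fintype.card N4 = 4 := by decide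
      simpa [h2] using h1
    have hn3 : n ≤ 3 := by omega
    interval_cases n
    · -- n = 0 : C = Y, impossible
      exact absurd (h0.symm.trans hl) (by decide)
    · -- n = 1 : a single edge from C to Y, impossible
      have hv0 := hv ⟨0, by omega⟩
      have e0 : node (Fin.castSucc ⟨0, by omega⟩) = C := h0
      rw [e0] at hv0
      have hS : node (⟨1, by omega⟩ : Fin 2) = S := (step_from_C hv0).1
      have hY : node (⟨1, by omega⟩ : Fin 2) = Y := hl
      exact absurd (hS.symm.trans hY) (by decide)
    · -- n = 2 : impossible
      have hv0 := hv ⟨0, by omega⟩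
      have e0 : node (Fin.castSucc ⟨0, by omega⟩) = C := h0
      rw [e0] at hv0
      have hS : node (⟨1, by omega⟩ : Fin 3) = S := (step_from_C hv0).1
      have hv1 := hv ⟨1, by omega⟩
      have eS : node (Fin.castSucc ⟨1, by omega⟩) = S := hS
      have eY : node (Fin.succ ⟨1, by omega⟩) = Y := hl
      rw [eS, eY] at hv1
      exact absurd (step_to_Y hv1).1 (by decide)
    · -- n = 3 : the path must be C → S ← X ← Y, blocked at X
      have hv0 := hv ⟨0, by omega⟩
      have e0 : node (Fin.castSucc ⟨0, by omega⟩) = C := h0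
      rw [e0] at hv0
      have hS : node (⟨1, by omega⟩ : Fin 4) = S := (step_from_C hv0).1
      have hv2 := hv ⟨2, by omega⟩
      have eY : node (Fin.succ ⟨2, by omega⟩) = Y := hl
      rw [eY] at hv2
      have hXn : node (⟨2, by omega⟩ : Fin 4) = X := (step_to_Y hv2).1
      have hv1 := hv ⟨1, by omega⟩
      have eS1 : node (Fin.castSucc ⟨1, by omega⟩) = S := hS
      have eX1 : node (Fin.succ ⟨1, by omega⟩) = X := hXn
      rw [eS1, eX1] at hv1
      have hE1 : edge (⟨1, by omega⟩ : Fin 3) = .bwd := step_S_X hv1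
      refine Or.inr (Or.inr (Or.inr ⟨1, (by omega : (1:ℕ)+1 < 3), ?_, ?_, Or.inl ⟨?_, ?_⟩⟩))
      · intro hcol
        have hr : edge (⟨1, by omega⟩ : Fin 3) = .fwd ∨
            edge (⟨1, by omega⟩ : Fin 3) = .bi := hcol.1
        rcases hr with h | h <;> exact EdgeDir.noConfusion (hE1.symm.trans h)
      · exact Or.inl hXn
      · exact hE1
      · intro hmem
        have hmem' : S ∈ Grev.scc X := by
          rw [← hS, ← hXn]; exact hmem
        exact S_not_scc_X hmem'
  · -- not sigmaSep C Y {S}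
    intro h
    have hb := h wCY (show Function.Injective wCY.node by decide)
    rcases hb with hC | hY | ⟨i, hi, hc, hno⟩ | ⟨i, hi, hnc, hmem, _⟩
    · exact N4.noConfusion (hC : C = S)
    · exact N4.noConfusion (hY : Y = S)
    · have hwn : wCY.n = 3 := rfl
      have hi2 : i = 0 ∨ i = 1 := by omega
      rcases hi2 with rfl | rfl
      · exact hno S_mem_ancSet_S
      · have hr : wCY.edge (⟨1, by omega⟩ : Fin 3) = .fwd ∨
            wCY.edge (⟨1, by omega⟩ : Fin 3) = .bi := hc.1
        rcases hr with h' | h' <;> exact absurd h' (by decide)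
    · have hwn : wCY.n = 3 := rfl
      have hi2 : i = 0 ∨ i = 1 := by omega
      rcases hi2 with rfl | rfl
      · exact hnc ⟨Or.inl rfl, Or.inl rfl⟩
      · have hx : X = S := hmem
        exact N4.noConfusion hx
  · -- not sigmaSep C X {S}
    intro h
    have hb := h wCX (show Function.Injective wCX.node by decide)
    rcases hb with hC | hX | ⟨i, hi, hc, hno⟩ | ⟨i, hi, hnc, hmem, _⟩
    · exact N4.noConfusion (hC : C = S)
    · exact N4.noConfusion (hX : X = S)
    · have hwn : wCX.n = 2 := rfl
      have hi0 : i = 0 := by omega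
      subst hi0
      exact hno S_mem_ancSet_S
    · have hwn : wCX.n = 2 := rfl
      have hi0 : i = 0 := by omega
      subst hi0
      exact hnc ⟨Or.inl rfl, Or.inl rfl⟩
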